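/- Decay of the Eguchi–Hanson potential to the Euclidean potential with all derivatives (the expansion |∇^k(φ_{EH,s} − φ₀)| ≤ c₀(k)·r^{−2−k} of Proposition 'EHproperties'): Fix s > 0 and define f : ℝ → ℝ by f(r) = (1/2)·(s·Real.log(r^2) + Real.sqrt(s^2 + r^4) − s·Real.log(s + Real.sqrt(s^2 + r^4))) − r²/2. Then for every k ∈ ℕ there exist constants c > 0 and R ≥ 1 such that for all r ≥ R, |iteratedDeriv k f r| ≤ c·r^(−2−k). -/

import Mathlib

/-!
Write `u = √(s² + r⁴)`. Since `(u - r²)(u + r²) = s²`, the derivative of `f` is the single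
monomial `s² r⁻¹ (r² + u)⁻¹`. Using `u' = 2r³/u`, the derivative of a monomial
`c r^a u^(-b) (r² + u)^(-e)` is a sum of three monomials of the same shape whose weight
`a - 2b - 2e` is one less, and as `u ≥ r²` a monomial of weight `d` is at most `|c| r^d` for
`r ≥ 1`. So `f⁽ᵏ⁺¹⁾` is a finite sum of monomials of weight `-3 - k`. For `f` itself,
`f = (u - r²)/2 - (s/2) log (1 + (s + u - r²)/r²)` with `0 ≤ u - r² ≤ s²/(2r²)` and
`0 ≤ log (1 + x) ≤ x`.
-/

open Real Topology

theorem hasDerivAt_multiset_sum_map {ι 𝕜 F : Type*} [NontriviallyNormedField 𝕜]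
    [NormedAddCommGroup F] [NormedSpace 𝕜 F] {x : 𝕜} {S : Multiset ι} {f : ι → 𝕜 → F}
    {f' : ι → F} (h : ∀ i ∈ S, HasDerivAt (f i) (f' i) x) :
    HasDerivAt (fun y => (S.map fun i => f i y).sum) (S.map f').sum x := by
  induction S using Multiset.induction_on with
  | empty => simpa using hasDerivAt_const x (0 : F)
  | cons i S ih =>
    simpa using (h i (Multiset.mem_cons_self i S)).fun_add
      (ih fun j hj => h j (Multiset.mem_cons_of_mem hj))

namespace EguchiHanson

noncomputable def sqrtQuartic (s r : ℝ) : ℝ := √(s ^ 2 + r ^ 4)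

noncomputable def potentialDiff (s : ℝ) (r : ℝ) : ℝ :=
  (1 / 2) * (s * log (r ^ 2) + sqrtQuartic s r - s * log (s + sqrtQuartic s r)) - r ^ 2 / 2

variable {s r : ℝ}

theorem sq_sqrtQuartic : sqrtQuartic s r ^ 2 = s ^ 2 + r ^ 4 :=
  sq_sqrt (by positivity)

theorem sq_le_sqrtQuartic : r ^ 2 ≤ sqrtQuartic s r :=
  le_sqrt_of_sq_le (by nlinarith [sq_nonneg s])

theorem sqrtQuartic_pos (hr : r ≠ 0) : 0 < sqrtQuartic s r :=
  (by positivity : (0 : ℝ) < r ^ 2).trans_le sq_le_sqrtQuartic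

theorem hasDerivAt_sqrtQuartic (hr : r ≠ 0) :
    HasDerivAt (sqrtQuartic s) (2 * r ^ 3 / sqrtQuartic s r) r := by
  refine (((hasDerivAt_pow 4 r).const_add (s ^ 2)).sqrt (by positivity)).congr_deriv ?_
  rw [sqrtQuartic]
  norm_num
  ring

/-- `coeff * r ^ rExp / (u ^ uExp * (r ^ 2 + u) ^ vExp)` with `u = √(s² + r⁴)`. -/
structure Monomial where
  coeff : ℝ
  rExp : ℤ
  uExp : ℕ
  vExp : ℕ

namespace Monomial

noncomputable def eval (s : ℝ) (m : Monomial) (r : ℝ) : ℝ :=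
  m.coeff * r ^ m.rExp / (sqrtQuartic s r ^ m.uExp * (r ^ 2 + sqrtQuartic s r) ^ m.vExp)

def weight (m : Monomial) : ℤ := m.rExp - 2 * m.uExp - 2 * m.vExp

def deriv (m : Monomial) : Multiset Monomial :=
  {⟨m.rExp * m.coeff, m.rExp - 1, m.uExp, m.vExp⟩,
   ⟨-2 * m.uExp * m.coeff, m.rExp + 3, m.uExp + 2, m.vExp⟩,
   ⟨-2 * m.vExp * m.coeff, m.rExp + 1, m.uExp + 1, m.vExp⟩}

theorem weight_of_mem_deriv {m m' : Monomial} (h : m' ∈ m.deriv) :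
    m'.weight = m.weight - 1 := by
  simp only [deriv, Multiset.insert_eq_cons, Multiset.mem_cons, Multiset.mem_singleton] at h
  rcases h with rfl | rfl | rfl <;> simp only [weight] <;> push_cast <;> ring

theorem abs_eval_le (m : Monomial) (hr : 1 ≤ r) : |m.eval s r| ≤ |m.coeff| * r ^ m.weight := by
  obtain ⟨c, a, b, e⟩ := m
  have hr0 : 0 < r := one_pos.trans_le hr
  have hden : (r ^ 2) ^ b * (r ^ 2) ^ e ≤
      sqrtQuartic s r ^ b * (r ^ 2 + sqrtQuartic s r) ^ e := by
    have hu0 : 0 ≤ sqrtQuartic s r := sqrt_nonneg _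
    have hu : r ^ 2 ≤ sqrtQuartic s r := sq_le_sqrtQuartic
    gcongr
    exact le_add_of_nonneg_right hu0
  have hweight : r ^ (a - 2 * b - 2 * e : ℤ) = r ^ a / ((r ^ 2) ^ b * (r ^ 2) ^ e) := by
    rw [← pow_mul, ← pow_mul, ← pow_add, ← zpow_natCast, ← zpow_sub₀ hr0.ne']
    push_cast
    ring_nf
  rw [eval, weight, hweight, abs_div, abs_mul, abs_of_pos (zpow_pos hr0 a),
    abs_of_pos ((by positivity : (0 : ℝ) < _).trans_le hden), mul_div_assoc]
  gcongr

end Monomial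

noncomputable def evalSum (s : ℝ) (P : Multiset Monomial) (r : ℝ) : ℝ :=
  (P.map fun m => m.eval s r).sum

def derivSum (P : Multiset Monomial) : Multiset Monomial := P.bind Monomial.deriv

theorem Monomial.hasDerivAt_eval (m : Monomial) (hr : r ≠ 0) :
    HasDerivAt (m.eval s) (evalSum s m.deriv r) r := by
  obtain ⟨c, a, b, e⟩ := m
  set u := sqrtQuartic s r with hu_def
  have hu : 0 < u := sqrtQuartic_pos hr
  have hv : 0 < r ^ 2 + u := by positivity
  have hU : HasDerivAt (sqrtQuartic s) (2 * r ^ 3 / u) r := hasDerivAt_sqrtQuartic hr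
  have hV : HasDerivAt (fun x => x ^ 2 + sqrtQuartic s x) (2 * r * (r ^ 2 + u) / u) r :=
    ((hasDerivAt_pow 2 r).add hU).congr_deriv (by field_simp; ring)
  have hR := (hasDerivAt_zpow a r (.inl hr)).const_mul c
  have hUb := (hasDerivAt_zpow (-b) u (.inl hu.ne')).comp r hU
  have hVe := (hasDerivAt_zpow (-e) (r ^ 2 + u) (.inl hv.ne')).comp r hV
  have hfun : eval s ⟨c, a, b, e⟩ = fun x =>
      c * x ^ a * sqrtQuartic s x ^ (-(b : ℤ)) * (x ^ 2 + sqrtQuartic s x) ^ (-(e : ℤ)) := by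
    funext x
    simp only [eval, zpow_neg, zpow_natCast]
    ring
  rw [hfun]
  refine ((hR.fun_mul hUb).fun_mul hVe).congr_deriv ?_
  simp only [evalSum, Monomial.deriv, eval, Multiset.insert_eq_cons, Multiset.map_cons,
    Multiset.map_singleton, Multiset.sum_cons, Multiset.sum_singleton, Function.comp, ← hu_def]
  rw [zpow_sub_one₀ hr, zpow_sub_one₀ hu.ne', zpow_sub_one₀ hv.ne', zpow_add₀ hr, zpow_add₀ hr,
    zpow_neg, zpow_neg, zpow_natCast, zpow_natCast]
  push_cast
  field_simp
  ring

theorem hasDerivAt_evalSum (P : Multiset Monomial) (hr : r ≠ 0) :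
    HasDerivAt (evalSum s P) (evalSum s (derivSum P) r) r := by
  have h := hasDerivAt_multiset_sum_map fun m (_ : m ∈ P) => m.hasDerivAt_eval (s := s) hr
  rwa [evalSum, derivSum, Multiset.map_bind, Multiset.sum_bind] at *

theorem weight_of_mem_iterate_derivSum {P : Multiset Monomial} {d : ℤ}
    (hP : ∀ m ∈ P, m.weight = d) (n : ℕ) : ∀ m ∈ derivSum^[n] P, m.weight = d - n := by
  induction n with
  | zero => simpa using hP
  | succ n ih =>
    intro m hm
    rw [Function.iterate_succ_apply', derivSum, Multiset.mem_bind] at hm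
    obtain ⟨m₀, hm₀, hm⟩ := hm
    rw [Monomial.weight_of_mem_deriv hm, ih m₀ hm₀]
    push_cast
    ring

theorem abs_evalSum_le {P : Multiset Monomial} {d : ℤ} (hr : 1 ≤ r)
    (hP : ∀ m ∈ P, m.weight ≤ d) :
    |evalSum s P r| ≤ (P.map fun m => |m.coeff|).sum * r ^ d := by
  rw [← Multiset.sum_map_mul_right]
  refine Multiset.abs_sum_le_sum_abs.trans ?_
  rw [Multiset.map_map]
  refine Multiset.sum_map_le_sum_map _ _ fun m hm => (m.abs_eval_le hr).trans ?_
  gcongr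
  exact hP m hm

def derivPotentialDiff (s : ℝ) : Monomial := ⟨s ^ 2, -1, 0, 1⟩

theorem hasDerivAt_potentialDiff (hs : 0 < s) (hr : r ≠ 0) :
    HasDerivAt (potentialDiff s) ((derivPotentialDiff s).eval s r) r := by
  have hu : 0 < sqrtQuartic s r := sqrtQuartic_pos hr
  have hU := hasDerivAt_sqrtQuartic (s := s) hr
  have hlog_sq := (hasDerivAt_pow 2 r).log (pow_ne_zero 2 hr)
  have hlog_u := (hU.const_add s).log (by positivity)
  refine (((((hlog_sq.const_mul s).add hU).sub (hlog_u.const_mul s)).const_mul (1 / 2)).sub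
    ((hasDerivAt_pow 2 r).div_const 2)).congr_deriv ?_
  simp only [Monomial.eval, derivPotentialDiff]
  field_simp
  linear_combination 2 * r * (s - r ^ 2) * sqrtQuartic s r * (sq_sqrtQuartic (s := s) (r := r))

theorem potentialDiff_eq (hs : 0 < s) (hr : r ≠ 0) :
    potentialDiff s r = (sqrtQuartic s r - r ^ 2) / 2
      - s / 2 * log (1 + (s + (sqrtQuartic s r - r ^ 2)) / r ^ 2) := by
  have hu : 0 < sqrtQuartic s r := sqrtQuartic_pos hr
  have hr2 : r ^ 2 ≠ 0 := pow_ne_zero 2 hr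
  have : 1 + (s + (sqrtQuartic s r - r ^ 2)) / r ^ 2 = (s + sqrtQuartic s r) / r ^ 2 := by
    field_simp
    ring
  rw [this, log_div (by positivity) hr2, potentialDiff]
  ring

theorem abs_potentialDiff_le (hs : 0 < s) (hr : 1 ≤ r) :
    |potentialDiff s r| ≤ (s ^ 2 + s ^ 3) / r ^ 2 := by
  have hr2 : 1 ≤ r ^ 2 := one_le_pow₀ hr
  rw [potentialDiff_eq hs (by positivity), le_div_iff₀ (by positivity),
    ← abs_of_pos (by positivity : 0 < r ^ 2), ← abs_mul, abs_le,
    abs_of_pos (by positivity : 0 < r ^ 2)]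
  set A := sqrtQuartic s r - r ^ 2
  have hA0 : 0 ≤ A := sub_nonneg.2 sq_le_sqrtQuartic
  have hAr : A * (2 * r ^ 2) ≤ s ^ 2 := by
    have : A * (sqrtQuartic s r + r ^ 2) = s ^ 2 := by
      linear_combination (sq_sqrtQuartic (s := s) (r := r))
    nlinarith [sq_le_sqrtQuartic (s := s) (r := r)]
  set x := (s + A) / r ^ 2
  have hxr : x * r ^ 2 = s + A := div_mul_cancel₀ _ (by positivity)
  have hx0 : 0 ≤ x := by positivity
  have hlog0 : 0 ≤ log (1 + x) := log_nonneg (by linarith)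
  have hlog : log (1 + x) ≤ x := by linarith [log_le_sub_one_of_pos (by linarith : 0 < 1 + x)]
  have hlogr : log (1 + x) * r ^ 2 ≤ s + s ^ 2 / 2 := by
    nlinarith [mul_le_mul_of_nonneg_right hlog (by positivity : (0 : ℝ) ≤ r ^ 2)]
  have hslogr := mul_le_mul_of_nonneg_left hlogr hs.le
  have hslogr0 : 0 ≤ s * (log (1 + x) * r ^ 2) := by positivity
  constructor <;> nlinarith

theorem iteratedDeriv_succ_potentialDiff (hs : 0 < s) (n : ℕ) (hr : r ≠ 0) :
    iteratedDeriv (n + 1) (potentialDiff s) r =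
      evalSum s (derivSum^[n] {derivPotentialDiff s}) r := by
  induction n generalizing r with
  | zero => simp [evalSum, (hasDerivAt_potentialDiff hs hr).deriv]
  | succ n ih =>
    have hev : iteratedDeriv (n + 1) (potentialDiff s) =ᶠ[𝓝 r]
        evalSum s (derivSum^[n] {derivPotentialDiff s}) :=
      Filter.eventually_of_mem (isOpen_ne.mem_nhds hr) fun x hx => ih hx
    rw [iteratedDeriv_succ, hev.deriv_eq, (hasDerivAt_evalSum _ hr).deriv,
      Function.iterate_succ_apply']

theorem exists_abs_iteratedDeriv_potentialDiff_le (hs : 0 < s) (k : ℕ) :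
    ∃ C, ∀ r ≥ 1, |iteratedDeriv k (potentialDiff s) r| ≤ C * r ^ (-2 - k : ℤ) := by
  cases k with
  | zero =>
    refine ⟨s ^ 2 + s ^ 3, fun r hr => ?_⟩
    simpa [zpow_neg, div_eq_mul_inv] using abs_potentialDiff_le hs hr
  | succ n =>
    set P := derivSum^[n] {derivPotentialDiff s}
    have hweight : ∀ m ∈ P, m.weight = -3 - n := by
      refine weight_of_mem_iterate_derivSum (fun m hm => ?_) n
      rw [Multiset.mem_singleton.1 hm]
      rfl
    refine ⟨(P.map fun m => |m.coeff|).sum, fun r hr => ?_⟩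
    rw [iteratedDeriv_succ_potentialDiff hs n (by positivity)]
    refine abs_evalSum_le hr fun m hm => (hweight m hm).trans_le ?_
    push_cast
    linarith

end EguchiHanson

/-- Decay of the Eguchi–Hanson potential to the Euclidean potential with all derivatives:
for `f = φ_{EH,s} − φ₀` and every `k`, `|f⁽ᵏ⁾(r)| ≤ c·r^(−2−k)` for all sufficiently large `r`. -/
theorem eguchiHanson_potential_decay (s : ℝ) (hs : 0 < s) (k : ℕ) :
    ∃ c > (0 : ℝ), ∃ R ≥ (1 : ℝ), ∀ r ≥ R,
      |iteratedDeriv k (fun r : ℝ =>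
          (1/2) * (s * Real.log (r^2) + Real.sqrt (s^2 + r^4)
            - s * Real.log (s + Real.sqrt (s^2 + r^4))) - r^2/2) r|
        ≤ c * r ^ ((-2 : ℝ) - (k : ℝ)) := by
  obtain ⟨C, hC⟩ := EguchiHanson.exists_abs_iteratedDeriv_potentialDiff_le hs k
  refine ⟨max C 1, by positivity, 1, le_rfl, fun r hr => ?_⟩
  have hpow : r ^ ((-2 : ℝ) - k) = r ^ (-2 - k : ℤ) := by
    exact_mod_cast rpow_intCast r (-2 - k)
  rw [hpow]
  exact (hC r hr).trans
    (mul_le_mul_of_nonneg_right (le_max_left _ _) (zpow_nonneg (by linarith) _))
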